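/- arXiv:1407.4259 — 2 statements merged into one kernel-verified Lean document; each statement's English description precedes it below -/
import Mathlib

section
/- Let $U \subseteq \{0,1\}^\mathbb{N}$ be a set which is a union of disjoint cylinders $[u_i]$ with $\sum_i 2^{-|u_i|} < 1$. If every tail $x_k x_{k+1} x_{k+2}\dots$ of an infinite binary sequence $x$ belongs to $U$, then $x$ lies in the intersection of a decreasing sequence of open sets $V_n$ with $\mu(V_n) \le \rho^n$ where $\rho = \sum_i 2^{-|u_i|} < 1$; in particular $x$ belongs to a set of measure zero. -/
open scoped Classical ENNReal

/-- `f` is partial computable relative to oracle `O`: there is a partial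
computable functional `F` that, given the input together with a finite initial
segment of the oracle, may produce the answer; correct on oracle prefixes and
total on the domain of `f`. -/
def PartrecIn {α β : Type} [Primcodable α] [Primcodable β]
    (O : ℕ → Bool) (f : α →. β) : Prop :=
  ∃ F : α × List Bool →. β, Partrec F ∧
    (∀ a n b, b ∈ F (a, (List.range n).map O) → f a = Part.some b) ∧
    (∀ a b, b ∈ f a → ∃ n, b ∈ F (a, (List.range n).map O))

/-- The trivial (computable) oracle; relativization to it yields the
unrelativized notions. -/
def triv : ℕ → Bool := fun _ => false

/-- A prefix-free machine relative to oracle `O`: a partial `O`-computable map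
from binary strings (programs) to natural numbers (coding arbitrary finite
objects), whose domain is prefix-free. -/
structure PrefixMachineIn (O : ℕ → Bool) where
  M : List Bool →. ℕ
  partrec : PartrecIn O M
  prefixFree : ∀ p q : List Bool, (M p).Dom → (M q).Dom → p <+: q → p = q

/-- The complexity of `x` with respect to machine `U`: the least length of a
program producing `x`. -/
noncomputable def Kof {O : ℕ → Bool} (U : PrefixMachineIn O) (x : ℕ) : ℕ :=
  sInf {n | ∃ p : List Bool, p.length = n ∧ x ∈ U.M p}

/-- `U` is a universal prefix-free machine relative to `O`. -/
def IsUniversal {O : ℕ → Bool} (U : PrefixMachineIn O) : Prop :=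
  (∀ x : ℕ, ∃ p : List Bool, x ∈ U.M p) ∧
  ∀ M : PrefixMachineIn O, ∃ c : ℕ, ∀ (p : List Bool) (x : ℕ), x ∈ M.M p →
    ∃ q : List Bool, q.length ≤ p.length + c ∧ x ∈ U.M q

/-- The length-`n` prefix of an infinite binary sequence, as a finite string. -/
def preSeq (a : ℕ → Bool) (n : ℕ) : List Bool := (List.range n).map a

/-- Code a finite binary string as a natural number. -/
def strCode (u : List Bool) : ℕ := Encodable.encode u

/-- `a` is `K`-trivial with respect to the machine `U`. -/
def KTrivial {O : ℕ → Bool} (U : PrefixMachineIn O) (a : ℕ → Bool) : Prop :=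
  ∃ c : ℕ, ∀ n : ℕ, Kof U (strCode (preSeq a n)) ≤ Kof U n + c

/-- The basic cylinder determined by a finite string. -/
def cyl (u : List Bool) : Set (ℕ → Bool) :=
  {x | ∀ i : ℕ, ∀ h : i < u.length, x i = u.get ⟨i, h⟩}

/-- The (outer) uniform measure on Cantor space: infimum of `∑ 2^{-|c i|}`
over countable coverings by cylinders. -/
noncomputable def cmeas (S : Set (ℕ → Bool)) : ℝ≥0∞ :=
  ⨅ (c : ℕ → List Bool) (_ : S ⊆ ⋃ i, cyl (c i)),
    ∑' i : ℕ, (2 : ℝ≥0∞)⁻¹ ^ (c i).length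

/-- A set of strings is computably enumerable relative to `O`. -/
def CEIn {α : Type} [Primcodable α] (O : ℕ → Bool) (S : Set α) : Prop :=
  ∃ f : α →. Unit, PartrecIn O f ∧ ∀ u, u ∈ S ↔ (f u).Dom

/-- `U` is an `O`-effectively open subset of Cantor space. -/
def EffOpenIn (O : ℕ → Bool) (U : Set (ℕ → Bool)) : Prop :=
  ∃ S : Set (List Bool), CEIn O S ∧ U = ⋃ u ∈ S, cyl u

/-- A Martin-Löf test relative to `O`: a uniformly `O`-effectively open
sequence of sets with `cmeas (U n) ≤ 2 ^ (-n)`. -/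
def MLTestIn (O : ℕ → Bool) (U : ℕ → Set (ℕ → Bool)) : Prop :=
  (∃ f : ℕ × List Bool →. Unit, PartrecIn O f ∧
      ∀ n, U n = ⋃ u ∈ {u : List Bool | (f (n, u)).Dom}, cyl u) ∧
  ∀ n, cmeas (U n) ≤ (2 : ℝ≥0∞)⁻¹ ^ n

/-- Martin-Löf randomness relative to oracle `O`. -/
def MLRandomIn (O : ℕ → Bool) (x : ℕ → Bool) : Prop :=
  ∀ U : ℕ → Set (ℕ → Bool), MLTestIn O U → x ∉ ⋂ n, U n

/-- Turing reducibility between infinite binary sequences. -/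
def TuringLE (a b : ℕ → Bool) : Prop :=
  PartrecIn b (fun n => Part.some (a n) : ℕ →. Bool)

/-- The halting problem `𝟎'` as an infinite binary sequence. -/
noncomputable def halting : ℕ → Bool :=
  fun n => decide (((Denumerable.ofNat Nat.Partrec.Code n).eval n).Dom)

/-- The tail of `x` starting at position `k`. -/
def seqTail (x : ℕ → Bool) (k : ℕ) : ℕ → Bool := fun n => x (n + k)

/-- Prepend a finite string to an infinite sequence. -/
def appendSeq (v : List Bool) (y : ℕ → Bool) : ℕ → Bool :=
  fun i => if h : i < v.length then v.get ⟨i, h⟩ else y (i - v.length)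

/-- The set of sequences that are a concatenation of `n` strings from the list
`u` followed by an arbitrary infinite tail. -/
def catSet (u : ℕ → List Bool) (n : ℕ) : Set (ℕ → Bool) :=
  {x | ∃ l : List ℕ, l.length = n ∧ ∃ y : ℕ → Bool, x = appendSeq ((l.map u).flatten) y}

/-!
Since every tail of `x` starts with one of the words `u i`, one can peel off word after word,
so `x` is a concatenation of `n` words followed by a tail for every `n`. The set `catSet u n` is
covered by the cylinders of the concatenations of `n` words, and the weight `2 ^ (-|w|)` is
multiplicative under concatenation, so the total weight of the cover is `ρ ^ n`.
-/

lemma appendSeq_append (v w : List Bool) (y : ℕ → Bool) :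
    appendSeq (v ++ w) y = appendSeq v (appendSeq w y) := by
  funext i
  simp only [appendSeq, List.length_append, List.get_eq_getElem]
  by_cases hv : i < v.length
  · rw [dif_pos (by omega), dif_pos hv, List.getElem_append_left hv]
  · rw [dif_neg hv]
    by_cases hw : i < v.length + w.length
    · rw [dif_pos hw, dif_pos (by omega), List.getElem_append_right (by omega)]
    · rw [dif_neg hw, dif_neg (by omega), Nat.sub_add_eq]

lemma appendSeq_mem_cyl (w : List Bool) (y : ℕ → Bool) : appendSeq w y ∈ cyl w := by
  intro i h
  simp [appendSeq, h]

lemma seqTail_appendSeq (w : List Bool) (y : ℕ → Bool) :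
    seqTail (appendSeq w y) w.length = y := by
  funext n
  simp [seqTail, appendSeq]

lemma appendSeq_seqTail_of_mem_cyl {w : List Bool} {x : ℕ → Bool} (h : x ∈ cyl w) :
    appendSeq w (seqTail x w.length) = x := by
  funext i
  simp only [appendSeq, seqTail, List.get_eq_getElem]
  split_ifs with hi
  · exact (h i hi).symm
  · congr 1
    omega

lemma cmeas_mono {S T : Set (ℕ → Bool)} (h : S ⊆ T) : cmeas S ≤ cmeas T :=
  le_iInf₂ fun c hc => iInf₂_le c (h.trans hc)

lemma ENNReal.tsum_inv_two_pow_add_succ (k : ℕ) :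
    ∑' m : ℕ, (2 : ℝ≥0∞)⁻¹ ^ (m + k + 1) = 2⁻¹ ^ k := by
  simp_rw [add_right_comm _ k, pow_add _ _ k]
  rw [ENNReal.tsum_mul_right, ENNReal.tsum_geometric_add_one, ENNReal.one_sub_inv_two,
    inv_inv, ENNReal.inv_mul_cancel two_ne_zero ENNReal.ofNat_ne_top, one_mul]

/-- The empty slots are filled with cylinders of total weight `2 ^ (-k)`, for arbitrarily
large `k`. -/
lemma cmeas_le_tsum_of_subset_iUnion_option (c : ℕ → Option (List Bool))
    {S : Set (ℕ → Bool)} (hS : S ⊆ ⋃ (m) (w ∈ c m), cyl w) :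
    cmeas S ≤ ∑' m, (c m).elim 0 fun w => (2 : ℝ≥0∞)⁻¹ ^ w.length := by
  refine ENNReal.le_of_forall_pos_le_add fun ε hε _ => ?_
  obtain ⟨k, hk⟩ := ENNReal.exists_inv_two_pow_lt (ENNReal.coe_ne_zero.2 hε.ne')
  let pad : ℕ → List Bool := fun m => (c m).getD (List.replicate (m + k + 1) true)
  have hcov : S ⊆ ⋃ m, cyl (pad m) := by
    intro x hx
    obtain ⟨m, w, hw, hxw⟩ := by simpa only [Set.mem_iUnion] using hS hx
    exact Set.mem_iUnion.2 ⟨m, by simpa [pad, Option.mem_def.1 hw] using hxw⟩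
  have hpad : ∀ m, (2 : ℝ≥0∞)⁻¹ ^ (pad m).length ≤
      (c m).elim 0 (fun w => 2⁻¹ ^ w.length) + 2⁻¹ ^ (m + k + 1) := by
    intro m
    cases h : c m <;> simp [pad, h]
  calc cmeas S ≤ ∑' m, (2 : ℝ≥0∞)⁻¹ ^ (pad m).length := iInf₂_le pad hcov
    _ ≤ ∑' m, ((c m).elim 0 (fun w => 2⁻¹ ^ w.length) + 2⁻¹ ^ (m + k + 1)) :=
      ENNReal.tsum_le_tsum hpad
    _ = (∑' m, (c m).elim 0 fun w => 2⁻¹ ^ w.length) + 2⁻¹ ^ k := by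
      rw [ENNReal.tsum_add, ENNReal.tsum_inv_two_pow_add_succ]
    _ ≤ _ := by gcongr

lemma cmeas_le_tsum_of_subset_iUnion {ι : Type*} [Encodable ι] (g : ι → List Bool)
    {S : Set (ℕ → Bool)} (hS : S ⊆ ⋃ i, cyl (g i)) :
    cmeas S ≤ ∑' i, (2 : ℝ≥0∞)⁻¹ ^ (g i).length := by
  let c : ℕ → Option (List Bool) := fun m => (Encodable.decode₂ ι m).map g
  have hcov : S ⊆ ⋃ (m) (w ∈ c m), cyl w := by
    refine hS.trans (Set.iUnion_subset fun i => ?_)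
    exact Set.subset_iUnion₂_of_subset (Encodable.encode i) (g i) (by simp [c])
  refine (cmeas_le_tsum_of_subset_iUnion_option c hcov).trans_eq ?_
  refine (Function.Injective.tsum_eq (Encodable.encode_injective (α := ι)) ?_).symm.trans ?_
  · intro m hm
    cases hd : Encodable.decode₂ ι m with
    | none => simp [c, hd] at hm
    | some i => exact ⟨i, Encodable.mem_decode₂.1 hd⟩
  · simp [c]

lemma ENNReal.tsum_prod_fin_eq_pow {α : Type*} (a : α → ℝ≥0∞) (n : ℕ) :
    ∑' f : Fin n → α, ∏ j, a (f j) = (∑' i, a i) ^ n := by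
  induction n with
  | zero => simp
  | succ n ih =>
    let e := Fin.consEquiv fun _ : Fin (n + 1) => α
    calc ∑' f : Fin (n + 1) → α, ∏ j, a (f j)
        = ∑' p : α × (Fin n → α), ∏ j, a (e p j) := (e.tsum_eq _).symm
      _ = ∑' p : α × (Fin n → α), a p.1 * ∏ j, a (p.2 j) := by
        simp [e, Fin.consEquiv, Fin.prod_univ_succ]
      _ = ∑' i, ∑' f : Fin n → α, a i * ∏ j, a (f j) :=
        ENNReal.tsum_prod (f := fun i (f : Fin n → α) => a i * ∏ j, a (f j))
      _ = (∑' i, a i) ^ (n + 1) := by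
        simp_rw [ENNReal.tsum_mul_left, ih, ENNReal.tsum_mul_right, pow_succ']

section catSet

variable (u : ℕ → List Bool)

lemma catSet_add_subset (n m : ℕ) : catSet u (n + m) ⊆ catSet u n := by
  rintro x ⟨l, hl, y, rfl⟩
  refine ⟨l.take n, by simp [hl], appendSeq ((l.drop n).map u).flatten y, ?_⟩
  rw [← appendSeq_append, ← List.flatten_append, ← List.map_append, List.take_append_drop]

lemma catSet_antitone : Antitone (catSet u) :=
  antitone_nat_of_succ_le fun n => catSet_add_subset u n 1

lemma mem_catSet_of_forall_seqTail_mem {x : ℕ → Bool}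
    (htail : ∀ k, seqTail x k ∈ ⋃ i, cyl (u i)) (n : ℕ) : x ∈ catSet u n := by
  induction n with
  | zero => exact ⟨[], rfl, x, by funext i; simp [appendSeq]⟩
  | succ n ih =>
    obtain ⟨l, hl, y, rfl⟩ := ih
    obtain ⟨i, hyi⟩ := Set.mem_iUnion.1 (seqTail_appendSeq _ y ▸ htail _)
    refine ⟨l ++ [i], by simp [hl], seqTail y (u i).length, ?_⟩
    rw [List.map_append, List.flatten_append, appendSeq_append]
    simp [appendSeq_seqTail_of_mem_cyl hyi]

lemma catSet_subset_iUnion_cyl (n : ℕ) :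
    catSet u n ⊆ ⋃ f : Fin n → ℕ, cyl ((List.ofFn f).map u).flatten := by
  rintro x ⟨l, rfl, y, rfl⟩
  exact Set.mem_iUnion.2 ⟨l.get, by simpa using appendSeq_mem_cyl _ y⟩

lemma cmeas_catSet_le (n : ℕ) :
    cmeas (catSet u n) ≤ (∑' i, (2 : ℝ≥0∞)⁻¹ ^ (u i).length) ^ n := by
  refine (cmeas_le_tsum_of_subset_iUnion _ (catSet_subset_iUnion_cyl u n)).trans_eq ?_
  rw [← ENNReal.tsum_prod_fin_eq_pow]
  refine tsum_congr fun f => ?_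
  simp [List.length_flatten, List.sum_ofFn, ← Finset.prod_pow_eq_pow_sum]

end catSet

theorem tails_in_U_implies_null_general (u : ℕ → List Bool)
    (ρ : ℝ≥0∞) (hρ : ρ = ∑' i : ℕ, (2 : ℝ≥0∞)⁻¹ ^ (u i).length) (hlt : ρ < 1)
    (x : ℕ → Bool) (htail : ∀ k : ℕ, seqTail x k ∈ ⋃ i : ℕ, cyl (u i)) :
    (∀ n, x ∈ catSet u n) ∧ Antitone (catSet u) ∧
      (∀ n, cmeas (catSet u n) ≤ ρ ^ n) ∧ cmeas (⋂ n, catSet u n) = 0 := by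
  have hmeas : ∀ n, cmeas (catSet u n) ≤ ρ ^ n := fun n => hρ ▸ cmeas_catSet_le u n
  refine ⟨mem_catSet_of_forall_seqTail_mem u htail, catSet_antitone u, hmeas, ?_⟩
  refine le_antisymm (ge_of_tendsto' (ENNReal.tendsto_pow_atTop_nhds_zero_of_lt_one hlt)
    fun n => ?_) bot_le
  exact (cmeas_mono (Set.iInter_subset _ n)).trans (hmeas n)

/-- if every tail of `x` belongs to the union of the disjoint
cylinders `[u i]`, of total measure `ρ < 1`, then `x` lies in the intersection
of the decreasing sequence of sets `catSet u n` of measures at most `ρ ^ n`;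
in particular `x` belongs to a set of measure zero. -/
theorem tails_in_U_implies_null (u : ℕ → List Bool)
    (hdisj : ∀ i j : ℕ, i ≠ j → ¬ u i <+: u j)
    (ρ : ℝ≥0∞) (hρ : ρ = ∑' i : ℕ, (2 : ℝ≥0∞)⁻¹ ^ (u i).length) (hlt : ρ < 1)
    (x : ℕ → Bool) (htail : ∀ k : ℕ, seqTail x k ∈ ⋃ i : ℕ, cyl (u i)) :
    (∀ n, x ∈ catSet u n) ∧ Antitone (catSet u) ∧
      (∀ n, cmeas (catSet u n) ≤ ρ ^ n) ∧ cmeas (⋂ n, catSet u n) = 0 :=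
  tails_in_U_implies_null_general u ρ hρ hlt x htail
end

section
/- There exists a computably enumerable set $A \subseteq \mathbb{N}$ that is simple: $A$ is c.e., its complement is infinite, and $A$ intersects every infinite c.e. set. -/
open scoped Classical ENNReal

/-!
Post's construction. For each index `e`, search the `e`-th c.e. set `W_e` (dovetailing over
stages) for an element `x > 2e` and let `A` collect the first such `x` found for every `e`.
`A` is the range of a partial computable function, hence c.e., and meets every infinite `W_e`.
Every element `x` of `A` is selected by some `e < x / 2`, and each `e` selects at most one
element, so `A` misses at least `n + 1` of the numbers `0, …, 2n` and `Aᶜ` is infinite.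
-/

open Nat.Partrec (Code)
open Nat.Partrec.Code

theorem REPred.exists_code {p : ℕ → Prop} (hp : REPred p) :
    ∃ c : Code, ∀ x, (c.eval x).Dom ↔ p x := by
  have hdom : Partrec fun x => (Part.assert (p x) fun _ => Part.some ()).map fun _ => 0 :=
    hp.map ((Computable.const 0).comp Computable.fst).to₂
  obtain ⟨c, hc⟩ := Nat.Partrec.Code.exists_code.1 (Partrec.nat_iff.1 hdom)
  exact ⟨c, fun x => by simpa [hc] using ⟨fun h => h.fst, fun h => ⟨h, trivial⟩⟩⟩

theorem Partrec.rePred_mem_ran {f : ℕ →. ℕ} (hf : Partrec f) : REPred (· ∈ f.ran) := by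
  obtain ⟨c, rfl⟩ := exists_code.1 (Partrec.nat_iff.1 hf)
  have hstep : Primrec₂ fun (x m : ℕ) => decide (evaln m.unpair.1 c m.unpair.2 = some x) :=
    PrimrecPred.decide (Primrec.eq.comp
      (primrec_evaln.comp (((Primrec.fst.comp (Primrec.unpair.comp Primrec.snd)).pair
        (Primrec.const c)).pair (Primrec.snd.comp (Primrec.unpair.comp Primrec.snd))))
      (Primrec.option_some.comp Primrec.fst))
  refine (Partrec.rfind hstep.to_comp.partrec₂).dom_re.of_eq fun x => ?_
  simp only [Nat.rfind_dom, PFun.coe_val, Part.mem_some_iff, true_eq_decide_iff, Part.some_dom,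
    implies_true, and_true, PFun.ran, evaln_complete, Option.mem_def, Set.mem_ofPred_eq]
  constructor
  · rintro ⟨m, hm⟩
    exact ⟨m.unpair.2, m.unpair.1, hm⟩
  · rintro ⟨n, k, hk⟩
    exact ⟨Nat.pair k n, by simpa using hk⟩

theorem infinite_compl_ran_of_two_mul_lt {f : ℕ →. ℕ} (hf : ∀ e x, x ∈ f e → 2 * e < x) :
    f.ranᶜ.Infinite := by
  intro hfin
  obtain ⟨N, hN⟩ := hfin.bddAbove
  have hran : ∀ x, N + 1 ≤ x → ∃ e, x ∈ f e := fun x hx => by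
    by_contra h
    exact absurd (hN h) (by omega)
  choose! idx hidx using hran
  -- `N + 2` values `x ∈ [N + 1, 2N + 2]` all get indices `e` with `2e < x`, i.e. `e ≤ N`.
  obtain ⟨x, hx, y, hy, hxy, hidxy⟩ := Finset.exists_ne_map_eq_of_card_lt_of_maps_to
    (s := Finset.Icc (N + 1) (2 * N + 2)) (t := Finset.range (N + 1)) (f := idx)
    (by simp; omega) (fun x hx => by
      simp only [Finset.coe_Icc, Set.mem_Icc] at hx
      have := hf _ _ (hidx x hx.1)
      simp only [Finset.coe_range, Set.mem_Iio]
      omega)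
  simp only [Finset.mem_Icc] at hx hy
  have hx' := hidx x hx.1
  rw [hidxy] at hx'
  exact hxy (Part.mem_unique hx' (hidx y hy.1))

def ceSet (e : ℕ) : Set ℕ := {x | ((Denumerable.ofNat Code e).eval x).Dom}

theorem REPred.exists_ceSet_eq {p : ℕ → Prop} (hp : REPred p) :
    ∃ e, ∀ x, x ∈ ceSet e ↔ p x := by
  obtain ⟨c, hc⟩ := hp.exists_code
  exact ⟨Encodable.encode c, by simp [ceSet, hc]⟩

/-- `n = ⟨s, x⟩` witnesses that `x > 2e` has appeared in `ceSet e` by stage `s`. -/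
def isLargeWitness (e n : ℕ) : Bool :=
  decide (2 * e < n.unpair.2) &&
    (evaln n.unpair.1 (Denumerable.ofNat Code e) n.unpair.2).isSome

def postSelect : ℕ →. ℕ := fun e =>
  (Nat.rfind fun n => Part.some (isLargeWitness e n)).map fun n => n.unpair.2

theorem isLargeWitness_primrec : Primrec₂ isLargeWitness :=
  Primrec.and.comp
    (PrimrecPred.decide (Primrec.nat_lt.comp
      (Primrec.nat_mul.comp (Primrec.const 2) Primrec.fst)
      (Primrec.snd.comp (Primrec.unpair.comp Primrec.snd))))
    (Primrec.option_isSome.comp (primrec_evaln.comp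
      (((Primrec.fst.comp (Primrec.unpair.comp Primrec.snd)).pair
        ((Primrec.ofNat Code).comp Primrec.fst)).pair
        (Primrec.snd.comp (Primrec.unpair.comp Primrec.snd)))))

theorem postSelect_partrec : Partrec postSelect :=
  (Partrec.rfind isLargeWitness_primrec.to_comp.partrec₂).map
    (Primrec.snd.comp (Primrec.unpair.comp Primrec.snd)).to_comp.to₂

theorem mem_postSelect {e x : ℕ} (h : x ∈ postSelect e) : 2 * e < x ∧ x ∈ ceSet e := by
  obtain ⟨n, hn, rfl⟩ := Part.mem_map_iff _ |>.1 h
  have hwit : isLargeWitness e n = true := by simpa using Nat.rfind_spec hn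
  simp only [isLargeWitness, Bool.and_eq_true, decide_eq_true_eq,
    Option.isSome_iff_exists] at hwit
  obtain ⟨hlt, y, hy⟩ := hwit
  exact ⟨hlt, Part.dom_iff_mem.2 ⟨y, evaln_sound hy⟩⟩

theorem postSelect_dom {e x : ℕ} (hx : x ∈ ceSet e) (hlt : 2 * e < x) : (postSelect e).Dom := by
  obtain ⟨y, hy⟩ := Part.dom_iff_mem.1 hx
  obtain ⟨s, hs⟩ := evaln_complete.1 hy
  have hwit : isLargeWitness e (Nat.pair s x) = true := by
    simp only [isLargeWitness, Nat.unpair_pair, Bool.and_eq_true, decide_eq_true_eq]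
    exact ⟨hlt, Option.isSome_iff_exists.2 ⟨y, hs⟩⟩
  obtain ⟨n, hn, -⟩ := Nat.rfind_min' (p := isLargeWitness e) hwit
  exact Part.dom_iff_mem.2 ⟨_, Part.mem_map _ hn⟩

/-- Post: there exists a simple set: a c.e. set with infinite
complement meeting every infinite c.e. set. -/
theorem exists_simple_set :
    ∃ A : Set ℕ, REPred (· ∈ A) ∧ (Aᶜ).Infinite ∧
      ∀ W : Set ℕ, REPred (· ∈ W) → W.Infinite → (A ∩ W).Nonempty := by
  refine ⟨postSelect.ran, postSelect_partrec.rePred_mem_ran,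
    infinite_compl_ran_of_two_mul_lt fun _ _ hx => (mem_postSelect hx).1, fun W hW hWinf => ?_⟩
  obtain ⟨e, he⟩ := hW.exists_ceSet_eq
  obtain ⟨x, hxW, hlt⟩ := hWinf.exists_gt (2 * e)
  obtain ⟨y, hy⟩ := Part.dom_iff_mem.1 (postSelect_dom ((he x).2 hxW) hlt)
  exact ⟨y, ⟨e, hy⟩, (he y).1 (mem_postSelect hy).2⟩
end
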